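/- For every natural number ℓ there exists a natural number s = s(ℓ) such that the following holds. Let G be a simple graph, let C₁ be an s-blob cycle in G and C₂ a 5-blob cycle in G, with C₁ and C₂ vertex disjoint, and suppose every vertex of the blob of C₂ has at least ⌊|V(C₁)|/2⌋ − ℓ neighbours (in G) among the vertices of C₁. Then there exist s' ≥ s − 2 and an s'-blob cycle C in G with vertex set V(C) = V(C₁) ∪ V(C₂) whose blob is contained in the blob of C₁. -/

import Mathlib

universe u

/-- An `s`-blob cycle in a simple graph `G`: a cyclic sequence of `m ≥ 3`
distinct vertices, consecutive ones adjacent in `G`, whose first `s`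
vertices are pairwise adjacent in `G` (the *blob*). -/
structure BlobCycle {V : Type u} (G : SimpleGraph V) (s : ℕ) where
  m : ℕ
  three_le_m : 3 ≤ m
  s_le_m : s ≤ m
  one_le_s : 1 ≤ s
  f : ZMod m → V
  inj : Function.Injective f
  adj_succ : ∀ i : ZMod m, G.Adj (f i) (f (i + 1))
  adj_blob : ∀ i j : ZMod m, i.val < s → j.val < s → i ≠ j → G.Adj (f i) (f j)

/-- The vertex set of a blob cycle. -/
def BlobCycle.verts {V : Type u} {G : SimpleGraph V} {s : ℕ} (C : BlobCycle G s) : Set V :=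
  Set.range C.f

/-- The blob of a blob cycle. -/
def BlobCycle.blob {V : Type u} {G : SimpleGraph V} {s : ℕ} (C : BlobCycle G s) : Set V :=
  C.f '' {i | i.val < s}

/-- `x` and `y` are consecutive vertices (an edge) of the blob cycle. -/
def BlobCycle.IsEdge {V : Type u} {G : SimpleGraph V} {s : ℕ} (C : BlobCycle G s)
    (x y : V) : Prop :=
  ∃ i : ZMod C.m, (C.f i = x ∧ C.f (i + 1) = y) ∨ (C.f i = y ∧ C.f (i + 1) = x)

/-!
Take `s = 2ℓ + 8` and let `N p` be the set of positions on `C₁` adjacent to the vertex at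
position `p ∈ {1, 2, 3}` of the blob of `C₂`. Any two of these three vertices are the ends of a
Hamiltonian path of `C₂`. If some position `i ≥ s - 1` lies in `N q` and `i + 1` in `N p`, the
path fits into the edge `i, i + 1` of `C₁` and the whole blob survives. If `N p` and `N q` contain
two different inner blob positions `x, y ∈ (0, s - 1)`, the cycle can be rerouted through the
blob so that `x` and `y` become consecutive, and the path fits in between at the cost of two blob
vertices. If neither happens, two of the `N p` have at most one inner blob position each, and
their tails beyond the blob are disjoint after shifting one of them by one; this leaves room for
only `m - s + 6 < 2 (⌊m / 2⌋ - ℓ)` neighbours of the two vertices.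
-/

namespace BlobCycle

variable {V : Type u} {G : SimpleGraph V} {s t : ℕ}

instance (C : BlobCycle G s) : NeZero C.m := ⟨by have := C.three_le_m; omega⟩

def vertex (C : BlobCycle G s) (n : ℕ) : V := C.f n

def toList (C : BlobCycle G s) : List V := (List.range C.m).map C.vertex

theorem vertex_mem_verts (C : BlobCycle G s) (n : ℕ) : C.vertex n ∈ C.verts := ⟨_, rfl⟩

theorem vertex_m (C : BlobCycle G s) : C.vertex C.m = C.vertex 0 := by
  simp [vertex]

theorem adj_vertex_succ (C : BlobCycle G s) (n : ℕ) : G.Adj (C.vertex n) (C.vertex (n + 1)) := by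
  simpa [vertex] using C.adj_succ n

theorem vertex_inj_of_lt (C : BlobCycle G s) {a b : ℕ} (ha : a < C.m) (hb : b < C.m)
    (h : C.vertex a = C.vertex b) : a = b := by
  simpa [ZMod.val_natCast, Nat.mod_eq_of_lt, ha, hb] using congrArg ZMod.val (C.inj h)

theorem vertex_mem_blob (C : BlobCycle G s) {n : ℕ} (hn : n < s) : C.vertex n ∈ C.blob :=
  ⟨n, by simpa [ZMod.val_cast_of_lt (hn.trans_le C.s_le_m)], rfl⟩

theorem isClique_blob (C : BlobCycle G s) : G.IsClique C.blob := by
  rintro _ ⟨i, hi, rfl⟩ _ ⟨j, hj, rfl⟩ hne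
  exact C.adj_blob i j hi hj (ne_of_apply_ne C.f hne)

theorem adj_vertex_of_lt (C : BlobCycle G s) {a b : ℕ} (ha : a < s) (hb : b < s) (hab : a ≠ b) :
    G.Adj (C.vertex a) (C.vertex b) :=
  C.isClique_blob (C.vertex_mem_blob ha) (C.vertex_mem_blob hb)
    (fun h => hab (C.vertex_inj_of_lt (ha.trans_le C.s_le_m) (hb.trans_le C.s_le_m) h))

theorem mem_toList {C : BlobCycle G s} {x : V} : x ∈ C.toList ↔ x ∈ C.verts := by
  refine ⟨fun hx => ?_, ?_⟩
  · obtain ⟨n, -, rfl⟩ := List.mem_map.mp hx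
    exact C.vertex_mem_verts n
  · rintro ⟨i, rfl⟩
    exact List.mem_map.mpr ⟨i.val, List.mem_range.mpr (ZMod.val_lt i), by simp [vertex]⟩

theorem nodup_toList (C : BlobCycle G s) : C.toList.Nodup :=
  List.nodup_range.map_on fun _ ha _ hb =>
    C.vertex_inj_of_lt (List.mem_range.mp ha) (List.mem_range.mp hb)

theorem isChain_map_vertex_range' (C : BlobCycle G s) (a k : ℕ) :
    ((List.range' a k).map C.vertex).IsChain G.Adj :=
  (List.isChain_map _).mpr <| (List.isChain_range' a k 1).imp fun n _ h => by
    rw [h]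
    exact C.adj_vertex_succ n

theorem isChain_map_vertex_of_forall_lt (C : BlobCycle G s) {l : List ℕ} (hl : l.Nodup)
    (hs : ∀ n ∈ l, n < s) : (l.map C.vertex).IsChain G.Adj :=
  (List.pairwise_map.mpr (hl.imp_of_mem fun ha hb hab =>
    C.adj_vertex_of_lt (hs _ ha) (hs _ hb) hab)).isChain

theorem isChain_arc_to_zero (C : BlobCycle G s) {a : ℕ} (ha : a < C.m) :
    (C.vertex a :: ((List.range' (a + 1) (C.m - (a + 1))).map C.vertex ++ [C.vertex 0])).IsChain
      G.Adj := by
  have h := C.isChain_map_vertex_range' a (C.m - a + 1)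
  rw [List.range'_1_concat, show C.m - a = C.m - (a + 1) + 1 by omega, List.range'_succ] at h
  simpa [show a + (C.m - (a + 1) + 1) = C.m by omega, C.vertex_m] using h

/-- Closedness of the walk `L` is encoded by appending its first vertex to it. -/
theorem exists_of_list (L : List V) (hnd : L.Nodup) (h3 : 3 ≤ L.length) (h1 : 1 ≤ s)
    (hs : s ≤ L.length) (hchain : (L ++ L.take 1).IsChain G.Adj)
    (hclique : G.IsClique {x | x ∈ L.take s}) :
    ∃ C : BlobCycle G s, C.verts = {x | x ∈ L} ∧ C.blob = {x | x ∈ L.take s} := by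
  have : NeZero L.length := ⟨by omega⟩
  have hinj : Function.Injective fun i : ZMod L.length => L[i.val]'(ZMod.val_lt i) :=
    fun i j h => ZMod.val_injective _ (hnd.getElem_inj_iff.mp h)
  have hsucc (k : ℕ) (hk : k < L.length) :
      G.Adj L[k] (L[(k + 1) % L.length]'(Nat.mod_lt _ (by omega))) := by
    have := hchain.getElem k (by simp; omega)
    rcases Nat.lt_or_ge (k + 1) L.length with hlt | hge
    · simpa [List.getElem_append, hk, hlt, Nat.mod_eq_of_lt] using this
    · have hk1 : k + 1 = L.length := by omega
      simpa [List.getElem_append, hk, hk1] using this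
  refine ⟨⟨L.length, h3, hs, h1, fun i => L[i.val]'(ZMod.val_lt i), hinj, fun i => ?_,
    fun i j hi hj hij => hclique ?_ ?_ (hinj.ne hij)⟩, ?_, ?_⟩
  · have e : (i + 1).val = (i.val + 1) % L.length := by
      rw [← ZMod.val_natCast, Nat.cast_succ, ZMod.natCast_zmod_val]
    simpa [e] using hsucc i.val (ZMod.val_lt i)
  · exact List.mem_take_iff_getElem.mpr ⟨i.val, by simp [hi, ZMod.val_lt], rfl⟩
  · exact List.mem_take_iff_getElem.mpr ⟨j.val, by simp [hj, ZMod.val_lt], rfl⟩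
  · ext x
    simp only [BlobCycle.verts, Set.mem_range, Set.mem_ofPred_eq, List.mem_iff_getElem]
    refine ⟨fun ⟨i, hi⟩ => ⟨i.val, ZMod.val_lt i, hi⟩, fun ⟨k, hk, hkx⟩ => ⟨k, ?_⟩⟩
    simpa [ZMod.val_cast_of_lt hk] using hkx
  · ext x
    simp only [BlobCycle.blob, Set.mem_image, Set.mem_ofPred_eq, List.mem_take_iff_getElem]
    refine ⟨fun ⟨i, hi, hix⟩ => ⟨i.val, by simp [hi, ZMod.val_lt], hix⟩,
      fun ⟨k, hk, hkx⟩ => ⟨k, ?_⟩⟩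
    have hk' : k < L.length := by omega
    simpa [ZMod.val_cast_of_lt hk', hk'] using ⟨by omega, hkx⟩

theorem exists_merge_of_perm {C₁ : BlobCycle G s} {C₂ : BlobCycle G t}
    (hdisj : Disjoint C₁.verts C₂.verts) {s' : ℕ} (h1 : 1 ≤ s') (hs' : s' ≤ C₁.m) {L : List V}
    (hperm : L.Perm (C₁.toList ++ C₂.toList)) (hchain : (L ++ L.take 1).IsChain G.Adj)
    (hblob : ∀ x ∈ L.take s', x ∈ C₁.blob) :
    ∃ C : BlobCycle G s', C.verts = C₁.verts ∪ C₂.verts ∧ C.blob ⊆ C₁.blob := by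
  have hlen : L.length = C₁.m + C₂.m := by simp [hperm.length_eq, toList]
  have hnd : L.Nodup := hperm.nodup_iff.mpr <| List.nodup_append.mpr
    ⟨C₁.nodup_toList, C₂.nodup_toList, fun _ hx _ hy => hdisj.ne_of_mem (mem_toList.mp hx)
      (mem_toList.mp hy)⟩
  obtain ⟨C, hCverts, hCblob⟩ := exists_of_list L hnd (by have := C₁.three_le_m; omega) h1
    (by omega) hchain (C₁.isClique_blob.subset hblob)
  refine ⟨C, ?_, hCblob ▸ hblob⟩
  ext x
  simp [hCverts, hperm.mem_iff, mem_toList]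

/-- The path is `q`, the third of the positions `1, 2, 3`, then `4, 5, …, m - 1, 0`, and `p`. -/
theorem exists_hamiltonian_path (C : BlobCycle G 5) {p q : ℕ} (hp : p ∈ Set.Icc 1 3)
    (hq : q ∈ Set.Icc 1 3) (hpq : p ≠ q) :
    ∃ M : List V, (C.vertex q :: M ++ [C.vertex p]).IsChain G.Adj ∧
      (C.vertex q :: M ++ [C.vertex p]).Perm C.toList := by
  obtain ⟨hp1, hp3⟩ := hp
  obtain ⟨hq1, hq3⟩ := hq
  have hm := C.s_le_m
  obtain ⟨r, hr1, hr3, hrp, hrq⟩ : ∃ r, 1 ≤ r ∧ r ≤ 3 ∧ r ≠ p ∧ r ≠ q := ⟨6 - p - q, by omega⟩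
  have hJ : (q :: r :: 4 :: List.range' 5 (C.m - 5) ++ [0, p]).Perm (List.range C.m) := by
    refine (List.perm_ext_iff_of_nodup ?_ List.nodup_range).mpr fun n => ?_
    · simp only [List.cons_append, List.nodup_cons, List.nodup_append, List.mem_cons,
        List.mem_append, List.mem_range'_1]
      grind
    · simp
      omega
  refine ⟨(r :: 4 :: List.range' 5 (C.m - 5) ++ [0]).map C.vertex, ?_, ?_⟩
  · simp only [List.map_cons, List.map_append, List.map_nil, List.cons_append, List.append_assoc,
      List.nil_append, List.isChain_cons_cons]
    exact ⟨C.adj_vertex_of_lt (by omega) (by omega) (by omega),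
      C.adj_vertex_of_lt (by omega) (by omega) (by omega),
      List.isChain_cons_split.mpr ⟨C.isChain_arc_to_zero (a := 4) (by omega),
        List.isChain_pair.mpr (C.adj_vertex_of_lt (by omega) (by omega) (by omega))⟩⟩
  · simpa [toList] using hJ.map C.vertex

/-- The merged cycle is `0, …, i, a, …, b, i + 1, …, m - 1`. -/
theorem exists_merge_of_adj_succ {C₁ : BlobCycle G s} {C₂ : BlobCycle G t}
    (hdisj : Disjoint C₁.verts C₂.verts) {a b : V} {M : List V}
    (hchain : (a :: M ++ [b]).IsChain G.Adj) (hperm : (a :: M ++ [b]).Perm C₂.toList) {i : ℕ}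
    (hi : s ≤ i + 1) (him : i + 1 < C₁.m) (hia : G.Adj (C₁.vertex i) a)
    (hbi : G.Adj b (C₁.vertex (i + 1))) :
    ∃ C : BlobCycle G s, C.verts = C₁.verts ∪ C₂.verts ∧ C.blob ⊆ C₁.blob := by
  set P := a :: M ++ [b]
  set A := (List.range' 0 (i + 1)).map C₁.vertex
  set B := (List.range' (i + 1) (C₁.m - (i + 1))).map C₁.vertex
  have hAB : A ++ B = C₁.toList := by
    have h := @List.range'_append_1 0 (i + 1) (C₁.m - (i + 1))
    rw [Nat.zero_add, Nat.add_sub_cancel' him.le] at h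
    rw [toList, List.range_eq_range', ← h, List.map_append]
  refine exists_merge_of_perm hdisj C₁.one_le_s C₁.s_le_m (L := A ++ P ++ B) ?_ ?_ ?_
  · rw [← hAB]
    simpa only [List.append_assoc] using
      (List.perm_append_comm.trans (hperm.append_left B)).append_left A
  · have h1 : (A ++ P ++ B).take 1 = [C₁.vertex 0] := by simp [A, List.range'_succ]
    have hB : B ++ [C₁.vertex 0] = C₁.vertex (i + 1) ::
        ((List.range' (i + 1 + 1) (C₁.m - (i + 1 + 1))).map C₁.vertex ++ [C₁.vertex 0]) := by
      simp [B, show C₁.m - (i + 1) = C₁.m - (i + 1 + 1) + 1 by omega, List.range'_succ]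
    rw [h1, List.append_assoc, List.append_assoc, hB]
    refine (C₁.isChain_map_vertex_range' 0 (i + 1)).append
      (hchain.append (C₁.isChain_arc_to_zero him) (by simp [P, List.getLast?_cons, hbi])) ?_
    simp [List.range'_1_concat, P, hia]
  · intro x hx
    rw [List.append_assoc, List.take_append_of_le_length (by simp [A]; omega),
      List.mem_take_iff_getElem] at hx
    obtain ⟨j, hj, rfl⟩ := hx
    simpa [A] using C₁.vertex_mem_blob (n := j) (by omega)

/-- The merged cycle is `x, F, s - 1, s, …, m - 1, 0, y, a, …, b`, where `F` lists the positions
`1, …, s - 2` other than `x` and `y`; its first `s - 2` vertices lie in the blob of `C₁`. -/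
theorem exists_merge_of_adj_blob {C₁ : BlobCycle G s} {C₂ : BlobCycle G t}
    (hdisj : Disjoint C₁.verts C₂.verts) {a b : V} {M : List V}
    (hchain : (a :: M ++ [b]).IsChain G.Adj) (hperm : (a :: M ++ [b]).Perm C₂.toList) {x y : ℕ}
    (hx : 0 < x) (hxs : x < s - 1) (hy : 0 < y) (hys : y < s - 1) (hxy : x ≠ y)
    (hya : G.Adj (C₁.vertex y) a) (hbx : G.Adj b (C₁.vertex x)) :
    ∃ C : BlobCycle G (s - 2), C.verts = C₁.verts ∪ C₂.verts ∧ C.blob ⊆ C₁.blob := by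
  have hm := C₁.s_le_m
  set F := (List.range' 1 (s - 2)).filter fun n => n ≠ x ∧ n ≠ y
  set I := x :: F ++ (s - 1) :: List.range' s (C₁.m - s) ++ [0, y]
  have hI : I.Perm (List.range C₁.m) := by
    refine (List.perm_ext_iff_of_nodup ?_ List.nodup_range).mpr fun n => ?_
    · simp [I, F, List.nodup_append, List.nodup_range', List.Nodup.filter]
      exact ⟨by omega, ⟨by omega, by omega, fun n _ _ => by omega⟩,
        fun n _ _ _ _ => ⟨by omega, fun k _ => by omega⟩⟩
    · simp [I, F]
      grind
  refine exists_merge_of_perm hdisj (by omega) (by omega) (L := I.map C₁.vertex ++ (a :: M ++ [b]))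
    ((hI.map _).append hperm) ?_ ?_
  · have h1 : (I.map C₁.vertex ++ (a :: M ++ [b])).take 1 = [C₁.vertex x] := by simp [I]
    rw [h1]
    simp only [I, List.map_cons, List.map_append, List.cons_append, List.append_assoc,
      List.nil_append, List.map_nil]
    rw [List.isChain_cons_split]
    refine ⟨?_, ?_⟩
    · have hnd : (x :: F ++ [s - 1]).Nodup :=
        (hI.nodup_iff.mpr List.nodup_range).sublist (by simp [I])
      simpa using C₁.isChain_map_vertex_of_forall_lt hnd fun n hn => by
        simp [F] at hn; omega
    · simp only [List.isChain_cons_append_cons_cons, List.isChain_cons_cons]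
      refine ⟨?_, C₁.adj_vertex_of_lt (by omega) (by omega) (by omega), hya, by simpa using hchain,
        hbx, List.isChain_singleton _⟩
      simpa [Nat.sub_add_cancel (show 1 ≤ s by omega)] using
        C₁.isChain_arc_to_zero (a := s - 1) (by omega)
  · intro z hz
    have hF : F.length = s - 4 := by
      have := hI.length_eq
      simp [I] at this
      omega
    rw [show I.map C₁.vertex ++ (a :: M ++ [b]) = (x :: F ++ [s - 1]).map C₁.vertex ++
        ((List.range' s (C₁.m - s) ++ [0, y]).map C₁.vertex ++ (a :: M ++ [b])) by simp [I],
      List.take_append_of_le_length (by simp; omega)] at hz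
    obtain ⟨n, hn, rfl⟩ := List.mem_map.mp (List.mem_of_mem_take hz)
    exact C₁.vertex_mem_blob (by simp [F] at hn; omega)

section neighborPositions

variable [DecidableRel G.Adj]

def neighborPositions (C : BlobCycle G s) (v : V) : Finset ℕ :=
  (Finset.range C.m).filter fun n => G.Adj v (C.vertex n)

theorem ncard_neighborSet_inter_verts (C : BlobCycle G s) (v : V) :
    (G.neighborSet v ∩ C.verts).ncard = (C.neighborPositions v).card := by
  have h : G.neighborSet v ∩ C.verts = C.vertex '' ↑(C.neighborPositions v) := by
    ext w
    constructor
    · rintro ⟨hw, i, rfl⟩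
      exact ⟨i.val, Finset.mem_filter.mpr ⟨Finset.mem_range.mpr (ZMod.val_lt i),
        by simpa [vertex] using hw⟩, by simp [vertex]⟩
    · rintro ⟨n, hn, rfl⟩
      exact ⟨(Finset.mem_filter.mp hn).2, C.vertex_mem_verts n⟩
  rw [h, Set.InjOn.ncard_image, Set.ncard_coe_finset]
  intro a ha b hb hab
  exact C.vertex_inj_of_lt (Finset.mem_range.mp (Finset.mem_filter.mp ha).1)
    (Finset.mem_range.mp (Finset.mem_filter.mp hb).1) hab

theorem exists_merge_of_succ_mem_neighborPositions {C₁ : BlobCycle G s} {C₂ : BlobCycle G 5}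
    (hdisj : Disjoint C₁.verts C₂.verts) {p q i : ℕ} (hp : p ∈ Set.Icc 1 3)
    (hq : q ∈ Set.Icc 1 3) (hpq : p ≠ q) (hi : s ≤ i + 1)
    (hiq : i ∈ C₁.neighborPositions (C₂.vertex q))
    (hip : i + 1 ∈ C₁.neighborPositions (C₂.vertex p)) :
    ∃ C : BlobCycle G s, C.verts = C₁.verts ∪ C₂.verts ∧ C.blob ⊆ C₁.blob := by
  obtain ⟨M, hchain, hperm⟩ := C₂.exists_hamiltonian_path hp hq hpq
  simp only [neighborPositions, Finset.mem_filter, Finset.mem_range] at hiq hip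
  exact exists_merge_of_adj_succ hdisj hchain hperm hi hip.1 hiq.2.symm hip.2

theorem exists_merge_of_mem_neighborPositions_inter_Ioo {C₁ : BlobCycle G s}
    {C₂ : BlobCycle G 5} (hdisj : Disjoint C₁.verts C₂.verts) {p q x y : ℕ}
    (hp : p ∈ Set.Icc 1 3) (hq : q ∈ Set.Icc 1 3) (hpq : p ≠ q)
    (hx : x ∈ C₁.neighborPositions (C₂.vertex p) ∩ Finset.Ioo 0 (s - 1))
    (hy : y ∈ C₁.neighborPositions (C₂.vertex q) ∩ Finset.Ioo 0 (s - 1)) (hxy : x ≠ y) :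
    ∃ C : BlobCycle G (s - 2), C.verts = C₁.verts ∪ C₂.verts ∧ C.blob ⊆ C₁.blob := by
  obtain ⟨M, hchain, hperm⟩ := C₂.exists_hamiltonian_path hp hq hpq
  simp only [neighborPositions, Finset.mem_inter, Finset.mem_filter, Finset.mem_Ioo] at hx hy
  exact exists_merge_of_adj_blob hdisj hchain hperm hx.2.1 hx.2.2 hy.2.1 hy.2.2 hxy
    hy.1.2.symm hx.1.2

end neighborPositions

end BlobCycle

theorem Finset.card_add_card_le_of_forall_add_one_notMem {A B : Finset ℕ} {a b : ℕ}
    (hA : A ⊆ Finset.Ico a b) (hB : B ⊆ Finset.Ico a b) (h : ∀ i ∈ A, i + 1 ∉ B) :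
    A.card + B.card ≤ b + 1 - a := by
  have hdisj : Disjoint (A.map (addRightEmbedding 1)) B := by
    simpa [Finset.disjoint_left] using h
  calc A.card + B.card = (A.map (addRightEmbedding 1) ∪ B).card := by
        rw [Finset.card_union_of_disjoint hdisj, Finset.card_map]
    _ ≤ (Finset.Ico a (b + 1)).card := by
        refine Finset.card_le_card (Finset.union_subset ?_ ?_) <;> intro i hi
        · obtain ⟨j, hj, rfl⟩ := Finset.mem_map.mp hi
          have := Finset.mem_Ico.mp (hA hj)
          simp; omega
        · have := Finset.mem_Ico.mp (hB hi)
          simp; omega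
    _ = b + 1 - a := Nat.card_Ico _ _

theorem Finset.card_add_card_le_of_sparse {A B : Finset ℕ} {m c : ℕ} (hcm : c ≤ m)
    (hA : A ⊆ Finset.range m) (hB : B ⊆ Finset.range m) (hA₁ : (A ∩ Finset.Ioo 0 c).card ≤ 1)
    (hB₁ : (B ∩ Finset.Ioo 0 c).card ≤ 1) (h : ∀ i ∈ A, c ≤ i → i + 1 ∉ B) :
    A.card + B.card ≤ m - c + 5 := by
  have split (X : Finset ℕ) (hX : X ⊆ Finset.range m) :
      X.card ≤ (X ∩ Finset.Ico c m).card + (X ∩ Finset.Ioo 0 c).card + 1 := by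
    calc X.card ≤ ((X ∩ Finset.Ico c m ∪ X ∩ Finset.Ioo 0 c) ∪ {0}).card := by
          refine Finset.card_le_card fun i hi => ?_
          have := Finset.mem_range.mp (hX hi)
          simp [hi]; omega
      _ ≤ _ := (Finset.card_union_le _ _).trans (by grw [Finset.card_union_le]; simp)
  have htail := Finset.card_add_card_le_of_forall_add_one_notMem
    (A := A ∩ Finset.Ico c m) (B := B ∩ Finset.Ico c m) Finset.inter_subset_right
    Finset.inter_subset_right fun i hi hi' =>
      h i (Finset.mem_inter.mp hi).1 (Finset.mem_Ico.mp (Finset.mem_inter.mp hi).2).1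
        (Finset.mem_inter.mp hi').1
  have := split A hA
  have := split B hB
  omega

theorem exists_pair_card_le_one_of_forall_eq {α : Type*} (S : ℕ → Finset α)
    (h : ∀ p ∈ Set.Icc 1 3, ∀ q ∈ Set.Icc 1 3, p ≠ q → ∀ x ∈ S p, ∀ y ∈ S q, x = y) :
    ∃ p ∈ Set.Icc 1 3, ∃ q ∈ Set.Icc 1 3, p ≠ q ∧ (S p).card ≤ 1 ∧ (S q).card ≤ 1 := by
  have small {p q : ℕ} (hp : p ∈ Set.Icc 1 3) (hq : q ∈ Set.Icc 1 3) (hpq : p ≠ q) {x : α}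
      (hx : x ∈ S p) : (S q).card ≤ 1 :=
    Finset.card_le_one.mpr fun _ h₁ _ h₂ => (h p hp q hq hpq x hx _ h₁).symm.trans
      (h p hp q hq hpq x hx _ h₂)
  have h₁ : 1 ∈ Set.Icc 1 3 := by simp
  have h₂ : 2 ∈ Set.Icc 1 3 := by simp
  have h₃ : 3 ∈ Set.Icc 1 3 := by simp
  rcases (S 1).eq_empty_or_nonempty with hS₁ | ⟨x, hx⟩
  · rcases (S 2).eq_empty_or_nonempty with hS₂ | ⟨y, hy⟩
    · exact ⟨1, h₁, 2, h₂, by simp, by simp [hS₁], by simp [hS₂]⟩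
    · exact ⟨1, h₁, 3, h₃, by simp, by simp [hS₁], small h₂ h₃ (by simp) hy⟩
  · exact ⟨2, h₂, 3, h₃, by simp, small h₁ h₂ (by simp) hx, small h₁ h₃ (by simp) hx⟩

/-- For every `ℓ` there exists `s = s(ℓ)` such that: if `C₁` is an
`s`-blob cycle and `C₂` a `5`-blob cycle in a simple graph `G`, vertex disjoint, and
every vertex of the blob of `C₂` has at least `⌊|V(C₁)|/2⌋ − ℓ` neighbours on `C₁`,
then there is an `s'`-blob cycle `C` with `s' ≥ s − 2`, vertex set `V(C₁) ∪ V(C₂)`,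
whose blob is contained in the blob of `C₁`. -/
theorem blobCycle_merge_five_blob :
    ∀ ℓ : ℕ, ∃ s : ℕ, ∀ (V : Type u) (G : SimpleGraph V)
      (C₁ : BlobCycle G s) (C₂ : BlobCycle G 5),
      Disjoint C₁.verts C₂.verts →
      (∀ x ∈ C₂.blob, C₁.m / 2 - ℓ ≤ (G.neighborSet x ∩ C₁.verts).ncard) →
      ∃ (s' : ℕ) (C : BlobCycle G s'), s - 2 ≤ s' ∧
        C.verts = C₁.verts ∪ C₂.verts ∧ C.blob ⊆ C₁.blob := by
  intro ℓ
  refine ⟨2 * ℓ + 8, fun V G C₁ C₂ hdisj hdeg => ?_⟩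
  classical
  by_contra hno
  have hm := C₁.s_le_m
  set N := fun p => C₁.neighborPositions (C₂.vertex p)
  have hN (p : ℕ) (hp : p ∈ Set.Icc 1 3) : C₁.m / 2 - ℓ ≤ (N p).card := by
    simpa [N, C₁.ncard_neighborSet_inter_verts] using
      hdeg _ (C₂.vertex_mem_blob (show p < 5 by grind))
  obtain ⟨p, hp, q, hq, hpq, hp₁, hq₁⟩ :=
    exists_pair_card_le_one_of_forall_eq (fun p => N p ∩ Finset.Ioo 0 (2 * ℓ + 7))
      fun p hp q hq hpq x hx y hy => by_contra fun hxy => hno <|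
        have ⟨C, hC⟩ := BlobCycle.exists_merge_of_mem_neighborPositions_inter_Ioo hdisj hp hq
          hpq hx hy hxy
        ⟨_, C, le_rfl, hC⟩
  have hsucc : ∀ i ∈ N q, 2 * ℓ + 7 ≤ i → i + 1 ∉ N p := fun i hi his hi' => hno <|
    have ⟨C, hC⟩ := BlobCycle.exists_merge_of_succ_mem_neighborPositions hdisj hp hq hpq
      (by omega) hi hi'
    ⟨_, C, by omega, hC⟩
  have := Finset.card_add_card_le_of_sparse (A := N q) (B := N p) (by omega)
    (Finset.filter_subset _ _) (Finset.filter_subset _ _) hq₁ hp₁ hsucc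
  have := hN p hp
  have := hN q hq
  omega
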